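/- Let y be a computable infinite binary sequence with infinitely many 1's. If x is Martin-Löf random with respect to the uniform measure λ, then x/y is Martin-Löf random with respect to λ. -/

import Mathlib

open MeasureTheory Filter
open scoped ENNReal

/-- Cylinder set `Δ(s)` of infinite binary sequences extending the finite string `s`. -/
def cyl (s : List Bool) : Set (ℕ → Bool) := {x | ∀ i < s.length, x i = s.getD i false}

/-- The first `n` bits `y_1^n` of an infinite sequence `y`. -/
def pref (y : ℕ → Bool) (n : ℕ) : List Bool := List.ofFn (fun i : Fin n => y i)

/-- `tau y j` is the (0-indexed) position of the `(j+1)`-st `1` in `y`. -/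
noncomputable def tau (y : ℕ → Bool) (j : ℕ) : ℕ := Nat.nth (fun i => y i = true) j

/-- The selected subsequence `x/y` of `x` at positions where `y` is `1`. -/
noncomputable def selSeq (x y : ℕ → Bool) : ℕ → Bool := fun j => x (tau y j)

/-- The `n`-th level of a set `U ⊆ ℕ × strings`, as a set of sequences. -/
def lvl (U : Set (ℕ × List Bool)) (n : ℕ) : Set (ℕ → Bool) :=
  ⋃ s ∈ {s : List Bool | (n, s) ∈ U}, cyl s

/-- `A` is recursively enumerable (as a set of pairs). -/
def REset (A : Set (ℕ × List Bool)) : Prop :=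
  ∃ f : ℕ × List Bool →. Unit, Partrec f ∧ ∀ a, a ∈ A ↔ (f a).Dom

/-- Martin-Löf test with respect to the measure `P`. -/
def MLTest (P : Measure (ℕ → Bool)) (U : Set (ℕ × List Bool)) : Prop :=
  REset U ∧ (∀ n, lvl U (n + 1) ⊆ lvl U n) ∧ ∀ n, P (lvl U n) < (2 : ℝ≥0∞)⁻¹ ^ n

/-- `y` is Martin-Löf random with respect to `P`: it passes every ML test. -/
def MLRandom (P : Measure (ℕ → Bool)) (y : ℕ → Bool) : Prop :=
  ∀ U : Set (ℕ × List Bool), MLTest P U → ∃ n, y ∉ lvl U n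

/-- `P` is a computable probability measure. -/
def ComputableMeasure (P : Measure (ℕ → Bool)) : Prop :=
  ∃ A : List Bool → ℕ → ℚ, Computable₂ A ∧
    ∀ s k, |(P (cyl s)).toReal - (A s k : ℝ)| < 1 / (k + 1)

/-! Selection along `y` is the coordinate map `x ↦ x ∘ τ`, where `τ` enumerates the positions of
the ones of `y` and is injective. Such a map sends the product of fair coin measures to itself, and
`λ` is that product because the two agree on cylinders. A test `U` therefore pulls back to the test
`{(n, t) | (n, t/y) ∈ U}`, with `t/y` the selection inside a finite string: it is c.e. because `y`
is computable, and its levels are the preimages of the levels of `U` under selection, so they have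
the same measure. If `x/y` failed `U`, then `x` would fail the pulled-back test. -/

lemma length_pref (x : ℕ → Bool) (n : ℕ) : (pref x n).length = n := List.length_ofFn

lemma pref_eq_map_range (x : ℕ → Bool) (n : ℕ) : pref x n = (List.range n).map x :=
  List.ext_getElem (by simp [length_pref]) fun i _ _ => by simp [pref]

lemma pref_succ (x : ℕ → Bool) (n : ℕ) : pref x (n + 1) = pref x n ++ [x n] := by
  simp [pref_eq_map_range, List.range_succ]

lemma mem_cyl_iff_pref_eq {x : ℕ → Bool} {s : List Bool} : x ∈ cyl s ↔ pref x s.length = s := by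
  simp only [cyl, Set.mem_ofPred_eq, List.ext_getElem_iff, length_pref, true_and]
  refine forall₂_congr fun i hi => ?_
  simp [pref, hi]

lemma mem_cyl_pref (x : ℕ → Bool) (n : ℕ) : x ∈ cyl (pref x n) := by
  rw [mem_cyl_iff_pref_eq, length_pref]

lemma cyl_nil : cyl [] = Set.univ := by simp [cyl]

lemma measurableSet_cyl (s : List Bool) : MeasurableSet (cyl s) := by
  have : cyl s = ⋂ i ∈ Finset.range s.length, (· i) ⁻¹' {s.getD i false} := by
    ext x; simp [cyl]
  rw [this]
  exact .biInter (Finset.countable_toSet _) fun i _ => measurable_pi_apply i (.singleton _)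

lemma measurableSet_lvl (U : Set (ℕ × List Bool)) (n : ℕ) : MeasurableSet (lvl U n) :=
  .biUnion (Set.to_countable _) fun s _ => measurableSet_cyl s

lemma cyl_subset_cyl_of_mem {x : ℕ → Bool} {s t : List Bool} (hs : x ∈ cyl s) (ht : x ∈ cyl t)
    (hst : s.length ≤ t.length) : cyl t ⊆ cyl s := fun z hz i hi => by
  rw [hz i (hi.trans_le hst), ← ht i (hi.trans_le hst), hs i hi]

lemma isPiSystem_range_cyl : IsPiSystem (Set.range cyl) := by
  rintro _ ⟨s, rfl⟩ _ ⟨t, rfl⟩ ⟨x, hs, ht⟩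
  rcases le_total s.length t.length with h | h
  · exact ⟨t, (Set.inter_eq_right.mpr (cyl_subset_cyl_of_mem hs ht h)).symm⟩
  · exact ⟨s, (Set.inter_eq_left.mpr (cyl_subset_cyl_of_mem ht hs h)).symm⟩

lemma setOf_apply_eq_iUnion_cyl (m : ℕ) (b : Bool) :
    {x : ℕ → Bool | x m = b} =
      ⋃ (s : List Bool) (_ : m < s.length ∧ s.getD m false = b), cyl s := by
  ext x
  simp only [Set.mem_ofPred_eq, Set.mem_iUnion, exists_prop]
  refine ⟨fun hx => ⟨pref x (m + 1), ?_, mem_cyl_pref x _⟩, fun ⟨s, ⟨hm, hs⟩, hx⟩ => hs ▸ hx m hm⟩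
  have := mem_cyl_pref x (m + 1) m
  simp_all [length_pref]

lemma generateFrom_range_cyl :
    MeasurableSpace.generateFrom (Set.range cyl) = MeasurableSpace.pi := by
  refine le_antisymm (MeasurableSpace.generateFrom_le ?_) (iSup_le fun m => ?_)
  · rintro _ ⟨s, rfl⟩
    exact measurableSet_cyl s
  · refine (@measurable_to_countable' Bool (ℕ → Bool) _ _ (.generateFrom _) (· m)
      fun b => ?_).comap_le
    rw [show (· m) ⁻¹' {b} = {x : ℕ → Bool | x m = b} from rfl, setOf_apply_eq_iUnion_cyl]
    exact .iUnion fun s => .iUnion fun _ => MeasurableSpace.measurableSet_generateFrom ⟨s, rfl⟩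

lemma ext_of_cyl {P Q : Measure (ℕ → Bool)} [IsFiniteMeasure P]
    (h : ∀ s, P (cyl s) = Q (cyl s)) : P = Q :=
  ext_of_generate_finite _ generateFrom_range_cyl.symm isPiSystem_range_cyl
    (by rintro _ ⟨s, rfl⟩; exact h s) (by simpa [cyl_nil] using h [])

noncomputable def coinFlips : Measure (ℕ → Bool) :=
  Measure.infinitePi fun _ => (PMF.uniformOfFintype Bool).toMeasure

instance : IsProbabilityMeasure coinFlips := by
  unfold coinFlips; infer_instance

lemma coinFlips_cyl (s : List Bool) : coinFlips (cyl s) = (2 : ℝ≥0∞)⁻¹ ^ s.length := by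
  have : cyl s = Set.pi (Finset.range s.length : Set ℕ) fun i => {s.getD i false} := by
    ext x; simp [cyl]
  rw [coinFlips, this, Measure.infinitePi_pi (μ := fun _ => (PMF.uniformOfFintype Bool).toMeasure)
    fun _ _ => .singleton _]
  simp [PMF.uniformOfFintype_apply]

lemma eq_coinFlips_of_cyl {P : Measure (ℕ → Bool)}
    (hP : ∀ s : List Bool, P (cyl s) = (2 : ℝ≥0∞)⁻¹ ^ s.length) : P = coinFlips :=
  (ext_of_cyl fun s => by rw [coinFlips_cyl, hP]).symm

lemma measurePreserving_selSeq_coinFlips {y : ℕ → Bool} (hy : {i | y i = true}.Infinite) :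
    MeasurePreserving (selSeq · y) coinFlips coinFlips :=
  ⟨measurable_pi_lambda _ fun _ => measurable_pi_apply _,
    Measure.map_infinitePi_infinitePi_of_inj (Nat.nth_injective hy)⟩

lemma measurePreserving_selSeq {P : Measure (ℕ → Bool)}
    (hP : ∀ s : List Bool, P (cyl s) = (2 : ℝ≥0∞)⁻¹ ^ s.length)
    {y : ℕ → Bool} (hy : {i | y i = true}.Infinite) : MeasurePreserving (selSeq · y) P P :=
  eq_coinFlips_of_cyl hP ▸ measurePreserving_selSeq_coinFlips hy

section PullbackTests

structure IsCylRealizer (g : List Bool → List Bool) (F : (ℕ → Bool) → ℕ → Bool) : Prop where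
  mem_cyl_of_mem_cyl {z : ℕ → Bool} {t : List Bool} : z ∈ cyl t → F z ∈ cyl (g t)
  exists_mem_cyl_of_mem_cyl {z : ℕ → Bool} {s : List Bool} :
    F z ∈ cyl s → ∃ t, z ∈ cyl t ∧ g t = s

def testComap (g : List Bool → List Bool) (U : Set (ℕ × List Bool)) : Set (ℕ × List Bool) :=
  {a | (a.1, g a.2) ∈ U}

variable {g : List Bool → List Bool} {F : (ℕ → Bool) → ℕ → Bool} {U : Set (ℕ × List Bool)}
  {P : Measure (ℕ → Bool)}

lemma IsCylRealizer.lvl_testComap (hgF : IsCylRealizer g F) (n : ℕ) :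
    lvl (testComap g U) n = F ⁻¹' lvl U n := by
  ext z
  simp only [lvl, testComap, Set.mem_iUnion, Set.mem_preimage, Set.mem_ofPred_eq, exists_prop]
  constructor
  · rintro ⟨t, htU, hzt⟩
    exact ⟨g t, htU, hgF.mem_cyl_of_mem_cyl hzt⟩
  · rintro ⟨s, hsU, hzs⟩
    obtain ⟨t, hzt, rfl⟩ := hgF.exists_mem_cyl_of_mem_cyl hzs
    exact ⟨t, hsU, hzt⟩

lemma REset.testComap (hU : REset U) (hg : Computable g) : REset (testComap g U) := by
  obtain ⟨f, hf, hfU⟩ := hU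
  exact ⟨fun a => f (a.1, g a.2), hf.comp (.pair .fst (hg.comp .snd)), fun a => hfU _⟩

lemma MLTest.testComap (hU : MLTest P U) (hg : Computable g) (hF : MeasurePreserving F P P)
    (hgF : IsCylRealizer g F) : MLTest P (testComap g U) := by
  obtain ⟨hre, hmono, hsize⟩ := hU
  refine ⟨hre.testComap hg, fun n => ?_, fun n => ?_⟩
  · simpa only [hgF.lvl_testComap] using Set.preimage_mono (hmono n)
  · rw [hgF.lvl_testComap, hF.measure_preimage (measurableSet_lvl U n).nullMeasurableSet]
    exact hsize n

theorem MLRandom.apply_of_isCylRealizer {x : ℕ → Bool} (hx : MLRandom P x) (hg : Computable g)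
    (hF : MeasurePreserving F P P) (hgF : IsCylRealizer g F) : MLRandom P (F x) := fun U hU => by
  obtain ⟨n, hn⟩ := hx _ (hU.testComap hg hF hgF)
  exact ⟨n, by rwa [hgF.lvl_testComap] at hn⟩

end PullbackTests

def selString (y : ℕ → Bool) (t : List Bool) : List Bool :=
  ((List.range t.length).filter y).map (t.getD · false)

lemma filter_range_eq_map_tau (y : ℕ → Bool) (n : ℕ) :
    (List.range n).filter y = (List.range (Nat.count (fun i => y i = true) n)).map (tau y) := by
  induction n with
  | zero => simp
  | succ n ih =>
    by_cases h : y n = true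
    · simp [List.range_succ, ih, Nat.count_succ, h, tau,
        Nat.nth_count (p := fun i => y i = true) h]
    · simp [List.range_succ, ih, Nat.count_succ, h]

lemma selString_pref (y x : ℕ → Bool) (n : ℕ) :
    selString y (pref x n) = pref (selSeq x y) (Nat.count (fun i => y i = true) n) := by
  have getD_pref : ∀ i ∈ (List.range n).filter y, (pref x n).getD i false = x i := fun i hi =>
    (mem_cyl_pref x n i (by simp_all [length_pref])).symm
  rw [selString, length_pref, List.map_congr_left getD_pref, filter_range_eq_map_tau, List.map_map,
    pref_eq_map_range]
  rfl

lemma computable_pref {y : ℕ → Bool} (hy : Computable y) : Computable (pref y) := by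
  refine (Computable.nat_rec (f := id) (g := fun _ => ([] : List Bool))
    (h := fun _ p => p.2 ++ [y p.1]) .id (.const []) ?_).of_eq fun n => ?_
  · exact (Primrec.list_append.to_comp.comp (Computable.snd.comp .snd)
      (Primrec.list_cons.to_comp.comp (hy.comp (Computable.fst.comp .snd)) (.const []))).to₂
  · induction n with
    | zero => rfl
    | succ n ih => simp only [id] at ih ⊢; rw [pref_succ, ← ih]

lemma primrec₂_selString_getD :
    Primrec₂ fun (ys t : List Bool) => selString (ys.getD · false) t := by
  have hfilter : Primrec₂ fun (L : List ℕ) (ys : List Bool) => L.filter (ys.getD · false) :=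
    (PrimrecRel.listFilter (R := fun i (ys : List Bool) => ys.getD i false = true)
      (Primrec.eq.comp (Primrec.list_getD false |>.comp Primrec.snd Primrec.fst)
        (Primrec.const true))).of_eq fun _ _ => by simp
  exact Primrec.list_map
    (hfilter.comp (Primrec.list_range.comp (Primrec.list_length.comp .snd)) .fst)
    ((Primrec.list_getD false).comp (Primrec.snd.comp .fst) .snd)

lemma computable_selString {y : ℕ → Bool} (hy : Computable y) : Computable (selString y) := by
  refine (primrec₂_selString_getD.to_comp.comp ((computable_pref hy).comp
    Primrec.list_length.to_comp) .id).of_eq fun t => ?_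
  refine congrArg (List.map _) (List.filter_congr fun i hi => ?_)
  have := mem_cyl_pref y t.length i
  simp_all [length_pref]

lemma isCylRealizer_selString {y : ℕ → Bool} (hy : {i | y i = true}.Infinite) :
    IsCylRealizer (selString y) (selSeq · y) where
  mem_cyl_of_mem_cyl {z t} hzt := by
    rw [← mem_cyl_iff_pref_eq.mp hzt, selString_pref]
    exact mem_cyl_pref _ _
  exists_mem_cyl_of_mem_cyl {z s} hzs := by
    refine ⟨pref z (tau y s.length), mem_cyl_pref _ _, ?_⟩
    rw [selString_pref, tau, Nat.count_nth_of_infinite hy, mem_cyl_iff_pref_eq.mp hzs]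

theorem selection_preserves_randomness_general
    (lam : Measure (ℕ → Bool))
    (hlam : ∀ s : List Bool, lam (cyl s) = (2 : ℝ≥0∞)⁻¹ ^ s.length)
    (y : ℕ → Bool) (hcomp : Computable y) (hy : {i | y i = true}.Infinite)
    (x : ℕ → Bool) (hx : MLRandom lam x) :
    MLRandom lam (selSeq x y) :=
  hx.apply_of_isCylRealizer (computable_selString hcomp) (measurePreserving_selSeq hlam hy)
    (isCylRealizer_selString hy)

/-- Selection by a computable sequence preserves Martin-Löf randomness with respect
to the uniform measure. -/
theorem selection_preserves_randomness
    (lam : Measure (ℕ → Bool)) [IsProbabilityMeasure lam]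
    (hlam : ∀ s : List Bool, lam (cyl s) = (2 : ℝ≥0∞)⁻¹ ^ s.length)
    (y : ℕ → Bool) (hcomp : Computable y) (hy : {i | y i = true}.Infinite)
    (x : ℕ → Bool) (hx : MLRandom lam x) :
    MLRandom lam (selSeq x y) :=
  selection_preserves_randomness_general lam hlam y hcomp hy x hx
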